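/- Let $(x_n)_{n\ge 0}$ be a sequence in a normed vector space $Z$. Suppose there exist a constant $\lambda \in [0,1)$ and a summable sequence of nonnegative reals $(\sigma_n)_n$ such that for all $n \ge 1$, $\|x_{n+1} - x_n\| \le \sigma_n(\|x_n\| + \|x_{n-1}\|) + \lambda \|x_n - x_{n-1}\|$. Then the series $\sum_n \|x_{n+1} - x_n\|$ converges; in particular $(x_n)_n$ is a Cauchy sequence in $Z$. -/

import Mathlib

/-!
Write `r n = ‖x n‖` and `d n = ‖x (n + 1) - x n‖`. With `α = 1 - λ`, the quantity
`W n = d n + α r n` satisfies `W (n + 1) ≤ (1 + (2 / α) σ (n + 1)) W n`, so it stays below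
`W 0 · exp ((2 / α) ∑ σ)`; hence `x` is bounded, say by `R`. The estimate then reads
`d (n + 1) ≤ λ d n + 2 R σ (n + 1)`, and a contraction perturbed by a summable sequence
has summable iterates.
-/

open Finset Real

theorem summable_of_le_mul_add {a b : ℕ → ℝ} {lam : ℝ} (ha : ∀ n, 0 ≤ a n)
    (hb0 : ∀ n, 0 ≤ b n) (hb : Summable b) (hlam1 : lam < 1)
    (h : ∀ n, a (n + 1) ≤ lam * a n + b n) : Summable a := by
  refine summable_of_sum_range_le (c := (a 0 + ∑' n, b n) / (1 - lam)) ha fun N => ?_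
  have hmono : ∑ n ∈ range N, a n ≤ ∑ n ∈ range (N + 1), a n :=
    sum_le_sum_of_subset_of_nonneg (range_subset_range.mpr N.le_succ) fun n _ _ => ha n
  have hstep : ∑ n ∈ range N, a (n + 1) ≤ lam * ∑ n ∈ range N, a n + ∑ n ∈ range N, b n := by
    rw [mul_sum, ← sum_add_distrib]
    exact sum_le_sum fun n _ => h n
  have hbN : ∑ n ∈ range N, b n ≤ ∑' n, b n := hb.sum_le_tsum _ fun n _ => hb0 n
  rw [sum_range_succ'] at hmono
  rw [le_div_iff₀ (by linarith)]
  linarith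

theorem le_mul_exp_sum_of_le_one_add_mul {W τ : ℕ → ℝ} (hW : ∀ n, 0 ≤ W n)
    (h : ∀ n, W (n + 1) ≤ (1 + τ n) * W n) (n : ℕ) :
    W n ≤ W 0 * exp (∑ k ∈ range n, τ k) := by
  induction n with
  | zero => simp
  | succ n ih =>
    calc W (n + 1) ≤ (1 + τ n) * W n := h n
      _ ≤ exp (τ n) * W n := by
        gcongr
        · exact hW n
        · linarith [add_one_le_exp (τ n)]
      _ ≤ exp (τ n) * (W 0 * exp (∑ k ∈ range n, τ k)) := by gcongr
      _ = W 0 * exp (∑ k ∈ range (n + 1), τ k) := by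
        rw [sum_range_succ, exp_add]
        ring

theorem le_mul_exp_tsum_of_le_one_add_mul {W τ : ℕ → ℝ} (hW : ∀ n, 0 ≤ W n)
    (hτ0 : ∀ n, 0 ≤ τ n) (hτ : Summable τ) (h : ∀ n, W (n + 1) ≤ (1 + τ n) * W n) (n : ℕ) :
    W n ≤ W 0 * exp (∑' k, τ k) :=
  (le_mul_exp_sum_of_le_one_add_mul hW h n).trans <| by
    gcongr
    · exact hW 0
    · exact hτ.sum_le_tsum _ fun k _ => hτ0 k

theorem exists_bound_of_le_perturbed_contraction {r d s : ℕ → ℝ} {lam : ℝ}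
    (hr : ∀ n, 0 ≤ r n) (hd : ∀ n, 0 ≤ d n) (hs0 : ∀ n, 0 ≤ s n) (hs : Summable s)
    (hlam0 : 0 ≤ lam) (hlam1 : lam < 1) (hr_succ : ∀ n, r (n + 1) ≤ r n + d n)
    (hd_succ : ∀ n, d (n + 1) ≤ s n * (r (n + 1) + r n) + lam * d n) :
    ∃ R, ∀ n, r n ≤ R := by
  set α := 1 - lam
  have hα0 : 0 < α := by linarith
  have hα2 : 1 ≤ 2 / α := by rw [le_div_iff₀ hα0]; linarith
  set W : ℕ → ℝ := fun n => d n + α * r n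
  have hW : ∀ n, 0 ≤ W n := fun n => add_nonneg (hd n) (mul_nonneg hα0.le (hr n))
  have hsum_le : ∀ n, r (n + 1) + r n ≤ 2 / α * W n := fun n => by
    have hexpand : 2 / α * W n = 2 / α * d n + 2 * r n := by
      simp only [W]
      field_simp
    nlinarith [hr_succ n, hd n]
  have hW_succ : ∀ n, W (n + 1) ≤ (1 + 2 / α * s n) * W n := fun n =>
    calc W (n + 1) ≤ W n + s n * (r (n + 1) + r n) := by
          simp only [W]
          nlinarith [hd_succ n, hr_succ n]
      _ ≤ W n + s n * (2 / α * W n) := by gcongr; exacts [hs0 n, hsum_le n]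
      _ = (1 + 2 / α * s n) * W n := by ring
  refine ⟨W 0 * exp (∑' k, 2 / α * s k) / α, fun n => ?_⟩
  rw [le_div_iff₀ hα0]
  have := le_mul_exp_tsum_of_le_one_add_mul hW (fun k => mul_nonneg (by positivity) (hs0 k))
    (hs.mul_left _) hW_succ n
  nlinarith [hd n]

/-- Lemma (Cauchy via perturbed contraction estimate): if `‖x (n+1) - x n‖ ≤
σ n * (‖x n‖ + ‖x (n-1)‖) + λ * ‖x n - x (n-1)‖` for all `n ≥ 1`, with `(σ n)` summable
nonnegative and `0 ≤ λ < 1`, then `∑ ‖x (n+1) - x n‖` converges and `x` is Cauchy. -/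
theorem stmt0 {Z : Type*} [NormedAddCommGroup Z] [NormedSpace ℝ Z]
    (x : ℕ → Z) (lam : ℝ) (hlam0 : 0 ≤ lam) (hlam1 : lam < 1)
    (σ : ℕ → ℝ) (hσ0 : ∀ n, 0 ≤ σ n) (hσ : Summable σ)
    (hrec : ∀ n : ℕ, 1 ≤ n →
      ‖x (n + 1) - x n‖ ≤ σ n * (‖x n‖ + ‖x (n - 1)‖) + lam * ‖x n - x (n - 1)‖) :
    Summable (fun n => ‖x (n + 1) - x n‖) ∧ CauchySeq x := by
  have hr_succ : ∀ n, ‖x (n + 1)‖ ≤ ‖x n‖ + ‖x (n + 1) - x n‖ := fun n =>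
    norm_le_norm_add_norm_sub' _ _
  have hd_succ : ∀ n, ‖x (n + 1 + 1) - x (n + 1)‖ ≤
      σ (n + 1) * (‖x (n + 1)‖ + ‖x n‖) + lam * ‖x (n + 1) - x n‖ := fun n => by
    simpa using hrec (n + 1) n.succ_pos
  obtain ⟨R, hR⟩ := exists_bound_of_le_perturbed_contraction (fun n => norm_nonneg (x n))
    (fun n => norm_nonneg _) (fun n => hσ0 (n + 1)) ((summable_nat_add_iff 1).mpr hσ)
    hlam0 hlam1 hr_succ hd_succ
  have hd : Summable (fun n => ‖x (n + 1) - x n‖) := by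
    refine summable_of_le_mul_add (b := fun n => 2 * R * σ (n + 1)) (fun n => norm_nonneg _)
      (fun n => mul_nonneg (by linarith [norm_nonneg (x 0), hR 0]) (hσ0 _))
      (((summable_nat_add_iff 1).mpr hσ).mul_left _) hlam1 fun n => ?_
    nlinarith [hd_succ n, hR n, hR (n + 1), hσ0 (n + 1)]
  exact ⟨hd, cauchySeq_of_summable_dist (by simpa [dist_eq_norm, norm_sub_rev] using hd)⟩
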